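/- arXiv:2204.12282 — 8 statements merged into one kernel-verified Lean document; each statement's English description precedes it below -/
import Mathlib

section
/- Let $(\Omega, \mathcal{A}, \mu)$ be a measure space and $\alpha \colon \Omega \to [0, \infty]$ a measurable function with $\int \alpha \, d\mu = \infty$. Then there either exists a $\sigma$-finite measurable set $A$ with $\int_A \alpha \, d\mu = \infty$, or a $\mu$-atom $A$ of infinite measure with $\int_A \alpha \, d\mu = \infty$. -/
/-!
The support of `α` is the increasing union of the level sets `{1/n < α}`. If all of them have
finite measure, their union is σ-finite and carries the whole integral. Otherwise some level set
`E` has infinite measure, and any subset of `E` of infinite measure has divergent integral since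
`α > 1/n` there. Exhaust `E` by a countable union `D` of finite-measure subsets of maximal measure:
either `μ D = ∞`, or `E \ D` has infinite measure and, by maximality of `D`, no subset of positive
finite measure, i.e. it is an atom of infinite measure.
-/

open MeasureTheory ENNReal

section Exhaustion

variable {Ω : Type*} [MeasurableSpace Ω] (μ : Measure Ω)

lemma exists_seq_measure_le_measure_iUnion (E : Set Ω) :
    ∃ B : ℕ → Set Ω, (∀ k, MeasurableSet (B k) ∧ B k ⊆ E ∧ μ (B k) < ⊤) ∧
      ∀ C, MeasurableSet C → C ⊆ E → μ C < ⊤ → μ C ≤ μ (⋃ k, B k) := by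
  set S : Set ℝ≥0∞ := (fun C => μ C) '' {C | MeasurableSet C ∧ C ⊆ E ∧ μ C < ⊤}
  have hS : S.Nonempty := ⟨0, ∅, by simp, measure_empty⟩
  obtain ⟨u, -, hu, huS⟩ := exists_seq_tendsto_sSup hS (OrderTop.bddAbove S)
  choose B hB hBu using huS
  refine ⟨B, hB, fun C hC hCE hCfin => ?_⟩
  calc μ C ≤ sSup S := le_sSup ⟨C, ⟨hC, hCE, hCfin⟩, rfl⟩
    _ ≤ μ (⋃ k, B k) :=
      le_of_tendsto' hu fun k => hBu k ▸ measure_mono (Set.subset_iUnion B k)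

lemma exists_sigmaFinite_or_atom_of_measure_eq_top {E : Set Ω} (hE : MeasurableSet E)
    (hμE : μ E = ⊤) :
    (∃ B : ℕ → Set Ω, (∀ k, MeasurableSet (B k) ∧ μ (B k) < ⊤) ∧
      ⋃ k, B k ⊆ E ∧ μ (⋃ k, B k) = ⊤) ∨
    (∃ A ⊆ E, MeasurableSet A ∧ μ A = ⊤ ∧ ∀ C ⊆ A, MeasurableSet C → μ C = 0 ∨ μ C = ⊤) := by
  obtain ⟨B, hB, hmax⟩ := exists_seq_measure_le_measure_iUnion μ E
  set D := ⋃ k, B k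
  have hDE : D ⊆ E := Set.iUnion_subset fun k => (hB k).2.1
  have hD : MeasurableSet D := .iUnion fun k => (hB k).1
  by_cases hμD : μ D = ⊤
  · exact Or.inl ⟨B, fun k => ⟨(hB k).1, (hB k).2.2⟩, hDE, hμD⟩
  refine Or.inr ⟨E \ D, Set.sdiff_subset, hE.diff hD, measure_sdiff_eq_top hμE hμD,
    fun C hCA hC => or_iff_not_imp_right.2 fun hCfin => ?_⟩
  have hDC : μ D + μ C ≤ μ D + 0 := by
    rw [add_zero, ← measure_union (Set.disjoint_of_subset_right hCA Set.disjoint_sdiff_right) hC]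
    exact hmax _ (hD.union hC) (Set.union_subset hDE (hCA.trans Set.sdiff_subset))
      (measure_union_lt_top (lt_top_iff_ne_top.2 hμD) (lt_top_iff_ne_top.2 hCfin))
  exact nonpos_iff_eq_zero.1 ((ENNReal.add_le_add_iff_left hμD).1 hDC)

lemma setLIntegral_eq_top_of_le {f : Ω → ℝ≥0∞} {T : Set Ω} (hT : MeasurableSet T) {c : ℝ≥0∞}
    (hc : c ≠ 0) (hcf : ∀ ω ∈ T, c ≤ f ω) (hμT : μ T = ⊤) : ∫⁻ ω in T, f ω ∂μ = ⊤ := by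
  refine top_le_iff.1 ?_
  calc ⊤ = ∫⁻ _ in T, c ∂μ := by rw [setLIntegral_const, hμT, mul_top hc]
    _ ≤ ∫⁻ ω in T, f ω ∂μ := setLIntegral_mono' hT hcf

end Exhaustion

/-- If `α : Ω → [0,∞]` is measurable with `∫ α dμ = ∞`, then there is either a
σ-finite measurable set over which the integral diverges, or a μ-atom of infinite measure
over which the integral diverges. -/
theorem divergent_subintegral {Ω : Type*} [MeasurableSpace Ω] (μ : Measure Ω)
    (α : Ω → ℝ≥0∞) (hα : Measurable α) (hdiv : ∫⁻ ω, α ω ∂μ = ⊤) :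
    (∃ A : Set Ω, MeasurableSet A ∧
      (∃ g : ℕ → Set Ω, A = ⋃ n, g n ∧ ∀ n, MeasurableSet (g n) ∧ μ (g n) < ⊤) ∧
      ∫⁻ ω in A, α ω ∂μ = ⊤) ∨
    (∃ A : Set Ω, MeasurableSet A ∧ μ A = ⊤ ∧
      (∀ B ⊆ A, MeasurableSet B → μ B = 0 ∨ μ B = μ A) ∧
      ∫⁻ ω in A, α ω ∂μ = ⊤) := by
  set g : ℕ → Set Ω := fun n => {ω | (n : ℝ≥0∞)⁻¹ < α ω}
  have hg (n : ℕ) : MeasurableSet (g n) := measurableSet_lt measurable_const hα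
  by_cases! hfin : ∀ n, μ (g n) < ⊤
  · have hsupp : Function.support α ⊆ ⋃ n, g n := fun ω hω =>
      Set.mem_iUnion.2 (ENNReal.exists_inv_nat_lt hω)
    refine Or.inl ⟨⋃ n, g n, .iUnion hg, ⟨g, rfl, fun n => ⟨hg n, hfin n⟩⟩, ?_⟩
    rwa [setLIntegral_eq_of_support_subset hsupp]
  obtain ⟨n, hn⟩ := hfin
  have hdiv_on (T : Set Ω) (hTg : T ⊆ g n) (hT : MeasurableSet T) (hμT : μ T = ⊤) :
      ∫⁻ ω in T, α ω ∂μ = ⊤ :=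
    setLIntegral_eq_top_of_le μ hT (ENNReal.inv_ne_zero.2 (natCast_ne_top n))
      (fun ω hω => (hTg hω).le) hμT
  rcases exists_sigmaFinite_or_atom_of_measure_eq_top μ (hg n) (top_le_iff.1 hn) with
    ⟨B, hB, hBg, hμB⟩ | ⟨A, hAg, hA, hμA, hatom⟩
  · have hBm : MeasurableSet (⋃ k, B k) := .iUnion fun k => (hB k).1
    exact Or.inl ⟨⋃ k, B k, hBm, ⟨B, rfl, hB⟩, hdiv_on _ hBg hBm hμB⟩
  · refine Or.inr ⟨A, hA, hμA, fun C hCA hC => ?_, hdiv_on A hAg hA hμA⟩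
    rw [hμA]
    exact hatom C hCA hC
end

section
/- Let $\varphi$ and $\phi$ be Orlicz integrands on $\Omega \times X$ such that there exist $L > 0$ and $f \in L_1(\mu)$ with $\varphi(\omega, x) \le \phi(\omega, L x) + f(\omega)$ for a.e. $\omega$ and all $x$. Then for every $u \in L_\phi(\mu)$ one has $u \in L_\varphi(\mu)$ and $\vvvert u \vvvert_\varphi \le L (1 + \|f\|_{L_1}) \vvvert u \vvvert_\phi$, where $\vvvert u \vvvert_\psi = \inf_{\alpha > 0} \alpha^{-1}[1 + I_\psi(\alpha u)]$ is the Amemiya norm and $I_\psi(u) = \int \psi(\omega, u(\omega))\, d\mu(\omega)$. -/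
/-!
Integrating the pointwise domination gives `I_φ(c u) ≤ I_ψ(L c u) + ‖f‖₁` for every `c`.
For the Amemiya norms, test the infimum defining `⦀u⦀_φ` at `α / L` and use
`1 + I + ‖f‖₁ ≤ (1 + ‖f‖₁)(1 + I)`. For membership, a scale `c` with `I_ψ(c u) ≤ 1` gives
`I_φ((c / L) u) < ∞`; since `φ(ω, ·)` is convex and vanishes at `0`, the modular scales at most
linearly on `[0, 1]`, so shrinking the scale further brings `I_φ` below `1`.
-/

open MeasureTheory Filter Topology ENNReal

/-- An Orlicz integrand `φ : Ω × X → [0,∞]`: for a.e. `ω` the partial map `φ ω` is an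
Orlicz function (even, convex, lsc, proper, vanishing continuously at the origin and
tending to `∞` at infinity), and `φ` is measurable in the sense that its composition
with any strongly measurable function is measurable. -/
structure IsOrliczIntegrand {Ω X : Type*} [MeasurableSpace Ω]
    [NormedAddCommGroup X] [NormedSpace ℝ X]
    (μ : Measure Ω) (φ : Ω → X → ℝ≥0∞) : Prop where
  ae_even : ∀ᵐ ω ∂μ, ∀ x : X, φ ω (-x) = φ ω x
  ae_convex : ∀ᵐ ω ∂μ, ∀ x y : X, ∀ a b : ℝ, 0 ≤ a → 0 ≤ b → a + b = 1 →
    φ ω (a • x + b • y) ≤ ENNReal.ofReal a * φ ω x + ENNReal.ofReal b * φ ω y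
  ae_lsc : ∀ᵐ ω ∂μ, LowerSemicontinuous (φ ω)
  ae_proper : ∀ᵐ ω ∂μ, ∃ x, φ ω x ≠ ⊤
  ae_zero : ∀ᵐ ω ∂μ, Tendsto (φ ω) (nhds 0) (nhds 0)
  ae_coercive : ∀ᵐ ω ∂μ, Tendsto (φ ω) (Filter.comap norm Filter.atTop) (nhds ⊤)
  meas_comp : ∀ u : Ω → X, StronglyMeasurable u → Measurable fun ω => φ ω (u ω)

/-- The Orlicz modular `I_φ(u) = ∫ φ(ω, u(ω)) dμ(ω)`. -/
noncomputable def orliczModular {Ω X : Type*} [MeasurableSpace Ω]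
    (μ : Measure Ω) (φ : Ω → X → ℝ≥0∞) (u : Ω → X) : ℝ≥0∞ :=
  ∫⁻ ω, φ ω (u ω) ∂μ

/-- The Luxemburg norm `‖u‖_φ = inf {α > 0 : I_φ(u/α) ≤ 1}`. -/
noncomputable def luxNorm {Ω X : Type*} [MeasurableSpace Ω]
    [NormedAddCommGroup X] [NormedSpace ℝ X]
    (μ : Measure Ω) (φ : Ω → X → ℝ≥0∞) (u : Ω → X) : ℝ≥0∞ :=
  ⨅ a : {a : ℝ // 0 < a ∧ orliczModular μ φ (fun ω => a⁻¹ • u ω) ≤ 1},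
    ENNReal.ofReal a

/-- Membership in the Orlicz space `L_φ(μ)`: strongly measurable with finite
Luxemburg norm. -/
def MemOrlicz {Ω X : Type*} [MeasurableSpace Ω]
    [NormedAddCommGroup X] [NormedSpace ℝ X]
    (μ : Measure Ω) (φ : Ω → X → ℝ≥0∞) (u : Ω → X) : Prop :=
  StronglyMeasurable u ∧ luxNorm μ φ u < ⊤

/-- The Amemiya norm `⦀u⦀_φ = inf_{α>0} α⁻¹ (1 + I_φ(α u))`. -/
noncomputable def amemiyaNorm {Ω X : Type*} [MeasurableSpace Ω]
    [NormedAddCommGroup X] [NormedSpace ℝ X]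
    (μ : Measure Ω) (φ : Ω → X → ℝ≥0∞) (u : Ω → X) : ℝ≥0∞ :=
  ⨅ a : {a : ℝ // 0 < a},
    ENNReal.ofReal (a : ℝ)⁻¹ * (1 + orliczModular μ φ (fun ω => (a : ℝ) • u ω))

section

variable {Ω X : Type*} [MeasurableSpace Ω] [NormedAddCommGroup X] [NormedSpace ℝ X]
  {μ : Measure Ω} {φ ψ : Ω → X → ℝ≥0∞}

theorem luxNorm_lt_top_iff {u : Ω → X} :
    luxNorm μ φ u < ⊤ ↔ ∃ c : ℝ, 0 < c ∧ orliczModular μ φ (fun ω => c • u ω) ≤ 1 := by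
  constructor
  · intro h
    by_contra! hne
    have hempty : IsEmpty {a : ℝ // 0 < a ∧ orliczModular μ φ (fun ω => a⁻¹ • u ω) ≤ 1} :=
      ⟨fun ⟨a, ha, hmod⟩ => (hne a⁻¹ (inv_pos.mpr ha)).not_ge hmod⟩
    simp [luxNorm] at h
  · rintro ⟨c, hc, hmod⟩
    refine lt_of_le_of_lt ?_ (ofReal_lt_top (r := c⁻¹))
    exact iInf_le_of_le ⟨c⁻¹, inv_pos.mpr hc, by rwa [inv_inv]⟩ le_rfl

theorem orliczModular_smul_le_add_lintegral {L : ℝ} {f : Ω → ℝ≥0∞} (hf : Measurable f)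
    (hdom : ∀ᵐ ω ∂μ, ∀ x : X, φ ω x ≤ ψ ω (L • x) + f ω) (u : Ω → X) (c : ℝ) :
    orliczModular μ φ (fun ω => c • u ω) ≤
      orliczModular μ ψ (fun ω => (L * c) • u ω) + ∫⁻ ω, f ω ∂μ := by
  rw [orliczModular, orliczModular, ← lintegral_add_right' _ hf.aemeasurable]
  refine lintegral_mono_ae ?_
  filter_upwards [hdom] with ω h
  simpa only [smul_smul] using h (c • u ω)

theorem amemiyaNorm_le_mul_amemiyaNorm {L : ℝ} (hL : 0 < L) {f : Ω → ℝ≥0∞}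
    (hf : Measurable f) (hf1 : ∫⁻ ω, f ω ∂μ ≠ ⊤)
    (hdom : ∀ᵐ ω ∂μ, ∀ x : X, φ ω x ≤ ψ ω (L • x) + f ω) (u : Ω → X) :
    amemiyaNorm μ φ u ≤ ENNReal.ofReal L * (1 + ∫⁻ ω, f ω ∂μ) * amemiyaNorm μ ψ u := by
  set F := ∫⁻ ω, f ω ∂μ
  set C := ENNReal.ofReal L * (1 + F)
  have hC0 : C ≠ 0 := mul_ne_zero (by simpa using hL) (by simp)
  have hCtop : C ≠ ⊤ := mul_ne_top ofReal_ne_top (add_ne_top.mpr ⟨one_ne_top, hf1⟩)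
  refine (le_iInf fun ⟨a, ha⟩ => ?_).trans_eq (mul_iInf_of_ne hC0 hCtop).symm
  set I := orliczModular μ ψ (fun ω => a • u ω)
  have hmod : orliczModular μ φ (fun ω => (a / L) • u ω) ≤ I + F := by
    simpa only [mul_div_cancel₀ a hL.ne'] using
      orliczModular_smul_le_add_lintegral hf hdom u (a / L)
  have hinv : ENNReal.ofReal (a / L)⁻¹ = ENNReal.ofReal L * ENNReal.ofReal a⁻¹ := by
    rw [← ofReal_mul hL.le, inv_div, div_eq_mul_inv]
  calc amemiyaNorm μ φ u
      ≤ ENNReal.ofReal (a / L)⁻¹ * (1 + orliczModular μ φ (fun ω => (a / L) • u ω)) :=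
        iInf_le_of_le ⟨a / L, div_pos ha hL⟩ le_rfl
    _ ≤ ENNReal.ofReal L * ENNReal.ofReal a⁻¹ * (1 + (I + F)) := by
        rw [hinv]; gcongr
    _ ≤ ENNReal.ofReal L * ENNReal.ofReal a⁻¹ * ((1 + F) * (1 + I)) := by
        gcongr
        calc 1 + (I + F) ≤ 1 + (I + F) + F * I := le_self_add
          _ = (1 + F) * (1 + I) := by ring
    _ = C * (ENNReal.ofReal a⁻¹ * (1 + I)) := by ring

namespace IsOrliczIntegrand

theorem ae_apply_zero (hφ : IsOrliczIntegrand μ φ) : ∀ᵐ ω ∂μ, φ ω 0 = 0 := by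
  filter_upwards [hφ.ae_zero] with ω h
  exact eq_of_tendsto_nhds h

theorem orliczModular_smul_le (hφ : IsOrliczIntegrand μ φ) {t : ℝ} (ht0 : 0 ≤ t)
    (ht1 : t ≤ 1) (v : Ω → X) :
    orliczModular μ φ (fun ω => t • v ω) ≤ ENNReal.ofReal t * orliczModular μ φ v := by
  rw [orliczModular, orliczModular, ← lintegral_const_mul' _ _ ofReal_ne_top]
  refine lintegral_mono_ae ?_
  filter_upwards [hφ.ae_convex, hφ.ae_apply_zero] with ω hconv h0
  simpa [h0] using hconv (v ω) 0 t (1 - t) ht0 (by linarith) (by ring)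

theorem luxNorm_lt_top (hφ : IsOrliczIntegrand μ φ) {u : Ω → X} {c : ℝ} (hc : 0 < c)
    (hmod : orliczModular μ φ (fun ω => c • u ω) ≠ ⊤) : luxNorm μ φ u < ⊤ := by
  set N := orliczModular μ φ (fun ω => c • u ω) + 1
  have hN0 : N ≠ 0 := by simp [N]
  have hNtop : N ≠ ⊤ := add_ne_top.mpr ⟨hmod, one_ne_top⟩
  set t := N.toReal⁻¹
  have ht0 : 0 < t := inv_pos.mpr (toReal_pos hN0 hNtop)
  have ht1 : t ≤ 1 := inv_le_one_of_one_le₀ (by simpa using toReal_mono hNtop le_add_self)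
  refine luxNorm_lt_top_iff.mpr ⟨t * c, mul_pos ht0 hc, ?_⟩
  calc orliczModular μ φ (fun ω => (t * c) • u ω)
      ≤ ENNReal.ofReal t * orliczModular μ φ (fun ω => c • u ω) := by
        simpa only [smul_smul] using hφ.orliczModular_smul_le ht0.le ht1 (fun ω => c • u ω)
    _ ≤ ENNReal.ofReal t * N := by gcongr; exact le_self_add
    _ = 1 := by
        rw [ofReal_inv_of_pos (toReal_pos hN0 hNtop), ofReal_toReal hNtop,
          ENNReal.inv_mul_cancel hN0 hNtop]

end IsOrliczIntegrand

end

theorem orlicz_embedding_general {Ω X : Type*} [MeasurableSpace Ω]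
    [NormedAddCommGroup X] [NormedSpace ℝ X]
    (μ : Measure Ω) (φ ψ : Ω → X → ℝ≥0∞)
    (hφ : IsOrliczIntegrand μ φ)
    (L : ℝ) (hL : 0 < L)
    (f : Ω → ℝ≥0∞) (hf : Measurable f) (hf1 : ∫⁻ ω, f ω ∂μ < ⊤)
    (hdom : ∀ᵐ ω ∂μ, ∀ x : X, φ ω x ≤ ψ ω (L • x) + f ω)
    (u : Ω → X) (hu : MemOrlicz μ ψ u) :
    MemOrlicz μ φ u ∧
      amemiyaNorm μ φ u ≤
        ENNReal.ofReal L * (1 + ∫⁻ ω, f ω ∂μ) * amemiyaNorm μ ψ u := by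
  obtain ⟨hum, hlux⟩ := hu
  obtain ⟨c, hc, hψc⟩ := luxNorm_lt_top_iff.mp hlux
  have hφc : orliczModular μ φ (fun ω => (c / L) • u ω) ≤ 1 + ∫⁻ ω, f ω ∂μ := by
    calc orliczModular μ φ (fun ω => (c / L) • u ω)
        ≤ orliczModular μ ψ (fun ω => c • u ω) + ∫⁻ ω, f ω ∂μ := by
          simpa only [mul_div_cancel₀ c hL.ne'] using
            orliczModular_smul_le_add_lintegral hf hdom u (c / L)
      _ ≤ 1 + ∫⁻ ω, f ω ∂μ := by gcongr
  refine ⟨⟨hum, hφ.luxNorm_lt_top (div_pos hc hL) ?_⟩,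
    amemiyaNorm_le_mul_amemiyaNorm hL hf hf1.ne hdom u⟩
  exact ne_top_of_le_ne_top (add_ne_top.mpr ⟨one_ne_top, hf1.ne⟩) hφc

/-- Embedding lemma between Orlicz spaces: if
`φ(ω,x) ≤ ψ(ω, L x) + f(ω)` with `f ∈ L₁(μ)`, then `L_ψ(μ) ⊆ L_φ(μ)` with
`⦀u⦀_φ ≤ L (1 + ‖f‖_{L₁}) ⦀u⦀_ψ`. -/
theorem orlicz_embedding {Ω X : Type*} [MeasurableSpace Ω]
    [NormedAddCommGroup X] [NormedSpace ℝ X]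
    (μ : Measure Ω) (φ ψ : Ω → X → ℝ≥0∞)
    (hφ : IsOrliczIntegrand μ φ) (hψ : IsOrliczIntegrand μ ψ)
    (L : ℝ) (hL : 0 < L)
    (f : Ω → ℝ≥0∞) (hf : Measurable f) (hf1 : ∫⁻ ω, f ω ∂μ < ⊤)
    (hdom : ∀ᵐ ω ∂μ, ∀ x : X, φ ω x ≤ ψ ω (L • x) + f ω)
    (u : Ω → X) (hu : MemOrlicz μ ψ u) :
    MemOrlicz μ φ u ∧
      amemiyaNorm μ φ u ≤
        ENNReal.ofReal L * (1 + ∫⁻ ω, f ω ∂μ) * amemiyaNorm μ ψ u :=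
  orlicz_embedding_general μ φ ψ hφ L hL f hf hf1 hdom u hu
end

section
/- The subspace $L_\varphi^\sigma(\mu)$ of those elements of $L_\varphi(\mu)$ that vanish outside some $\sigma$-finite measurable set is a closed linear subspace of $L_\varphi(\mu)$. -/
/-!
Convexity of `φ(ω, ·)` gives the triangle inequality for the Luxemburg norm and evenness gives
`‖c u‖_φ ≤ |c| ‖u‖_φ`; unions of two σ-finite sets are σ-finite, so `L_φ^σ(μ)` is a subspace.
For closedness, let `u n` vanish outside σ-finite sets `S n` and `‖u n - v‖_φ → 0`. Off
`T = ⋃ n, S n`, the function `-v` coincides with `u n - v`, so `w = 𝟙_{Tᶜ} (-v)` satisfies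
`‖w‖_φ ≤ ‖u n - v‖_φ` for all `n`, hence `‖w‖_φ = 0`. Then `∫ φ(ω, t_k w(ω)) dμ ≤ 1` along
scalings `t_k → ∞`; by Fatou `liminf_k φ(ω, t_k w(ω)) < ∞` a.e., which by coercivity of `φ`
forces `w = 0` a.e. Thus `v` vanishes outside the σ-finite set `T`.
-/

open MeasureTheory Filter Topology ENNReal

/-- A function is σ-finitely concentrated if it vanishes (a.e.) outside a σ-finite
measurable set. -/
def SigmaFiniteConc {Ω X : Type*} [MeasurableSpace Ω] [Zero X]
    (μ : MeasureTheory.Measure Ω) (u : Ω → X) : Prop :=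
  ∃ S : Set Ω, MeasurableSet S ∧
    (∃ g : ℕ → Set Ω, S = ⋃ n, g n ∧ ∀ n, MeasurableSet (g n) ∧ μ (g n) < ⊤) ∧
    ∀ᵐ ω ∂μ, ω ∉ S → u ω = 0

section SigmaFiniteConc

variable {Ω X : Type*} [MeasurableSpace Ω] {μ : Measure Ω}

theorem sigmaFiniteConc_iff [Zero X] {u : Ω → X} :
    SigmaFiniteConc μ u ↔ ∃ g : ℕ → Set Ω, (∀ n, MeasurableSet (g n) ∧ μ (g n) < ⊤) ∧
      ∀ᵐ ω ∂μ, ω ∉ ⋃ n, g n → u ω = 0 := by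
  constructor
  · rintro ⟨S, -, ⟨g, rfl, hg⟩, hu⟩
    exact ⟨g, hg, hu⟩
  · rintro ⟨g, hg, hu⟩
    exact ⟨⋃ n, g n, .iUnion fun n => (hg n).1, ⟨g, rfl, hg⟩, hu⟩

theorem sigmaFiniteConc_zero [Zero X] : SigmaFiniteConc μ (0 : Ω → X) :=
  sigmaFiniteConc_iff.2 ⟨fun _ => ∅, fun _ => ⟨.empty, by simp⟩, .of_forall fun _ _ => rfl⟩

theorem SigmaFiniteConc.mono [Zero X] {Y : Type*} [Zero Y] {u : Ω → X} {v : Ω → Y}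
    (hu : SigmaFiniteConc μ u) (h : ∀ᵐ ω ∂μ, u ω = 0 → v ω = 0) : SigmaFiniteConc μ v := by
  obtain ⟨S, hS, hSσ, hu⟩ := hu
  refine ⟨S, hS, hSσ, ?_⟩
  filter_upwards [hu, h] with ω hu h hω using h (hu hω)

theorem SigmaFiniteConc.add [AddZeroClass X] {u v : Ω → X}
    (hu : SigmaFiniteConc μ u) (hv : SigmaFiniteConc μ v) : SigmaFiniteConc μ (u + v) := by
  obtain ⟨g, hg, hu⟩ := sigmaFiniteConc_iff.1 hu
  obtain ⟨h, hh, hv⟩ := sigmaFiniteConc_iff.1 hv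
  refine sigmaFiniteConc_iff.2 ⟨fun n => g n ∪ h n, fun n => ⟨(hg n).1.union (hh n).1,
    (measure_union_le _ _).trans_lt (add_lt_top.2 ⟨(hg n).2, (hh n).2⟩)⟩, ?_⟩
  filter_upwards [hu, hv] with ω hu hv hω
  simp only [Set.iUnion_union_distrib, Set.mem_union, not_or] at hω
  simp [hu hω.1, hv hω.2]

theorem SigmaFiniteConc.const_smul [Zero X] {M : Type*} [SMulZeroClass M X] {u : Ω → X}
    (hu : SigmaFiniteConc μ u) (c : M) : SigmaFiniteConc μ (c • u) :=
  hu.mono (.of_forall fun ω h => by simp [h])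

end SigmaFiniteConc

section Orlicz

variable {Ω X : Type*} [MeasurableSpace Ω] [NormedAddCommGroup X] [NormedSpace ℝ X]
  {μ : Measure Ω} {φ : Ω → X → ℝ≥0∞}

theorem IsOrliczIntegrand.ae_apply_zero_s8 (hφ : IsOrliczIntegrand μ φ) :
    ∀ᵐ ω ∂μ, φ ω 0 = 0 := by
  filter_upwards [hφ.ae_zero] with ω h
  exact tendsto_nhds_unique (tendsto_pure_nhds (φ ω) 0) (h.mono_left (pure_le_nhds 0))

theorem luxNorm_le_ofReal {u : Ω → X} {a : ℝ} (ha : 0 < a)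
    (hu : orliczModular μ φ (fun ω => a⁻¹ • u ω) ≤ 1) : luxNorm μ φ u ≤ ENNReal.ofReal a :=
  iInf_le_of_le ⟨a, ha, hu⟩ le_rfl

theorem exists_orliczModular_le_one_of_luxNorm_lt {u : Ω → X} {r : ℝ≥0∞}
    (h : luxNorm μ φ u < r) :
    ∃ a : ℝ, 0 < a ∧ orliczModular μ φ (fun ω => a⁻¹ • u ω) ≤ 1 ∧ ENNReal.ofReal a < r := by
  obtain ⟨⟨a, ha, hm⟩, hlt⟩ := iInf_lt_iff.1 h
  exact ⟨a, ha, hm, hlt⟩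

theorem luxNorm_le_of_ae_eq_zero_or_eq (hφ : IsOrliczIntegrand μ φ) {u w : Ω → X}
    (h : ∀ᵐ ω ∂μ, w ω = 0 ∨ w ω = u ω) : luxNorm μ φ w ≤ luxNorm μ φ u :=
  le_iInf fun ⟨a, ha, hm⟩ => luxNorm_le_ofReal ha <| le_trans (lintegral_mono_ae <| by
    filter_upwards [hφ.ae_apply_zero_s8, h] with ω h0 hω
    rcases hω with hω | hω <;> simp [hω, h0]) hm

theorem orliczModular_add_le_one (hφ : IsOrliczIntegrand μ φ) {u v : Ω → X}
    (hu : StronglyMeasurable u) {a b : ℝ} (ha : 0 < a) (hb : 0 < b)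
    (hmu : orliczModular μ φ (fun ω => a⁻¹ • u ω) ≤ 1)
    (hmv : orliczModular μ φ (fun ω => b⁻¹ • v ω) ≤ 1) :
    orliczModular μ φ (fun ω => (a + b)⁻¹ • (u + v) ω) ≤ 1 := by
  set s := a / (a + b)
  set t := b / (a + b)
  have hst : s + t = 1 := by simp only [s, t, ← add_div, div_self (add_pos ha hb).ne']
  -- `(u + v) / (a + b)` is the convex combination of `u / a` and `v / b` with weights `s, t`.
  have hconv : ∀ᵐ ω ∂μ, φ ω ((a + b)⁻¹ • (u + v) ω) ≤
      ENNReal.ofReal s * φ ω (a⁻¹ • u ω) + ENNReal.ofReal t * φ ω (b⁻¹ • v ω) := by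
    filter_upwards [hφ.ae_convex] with ω hc
    convert hc (a⁻¹ • u ω) (b⁻¹ • v ω) s t (by positivity) (by positivity) hst using 2
    simp only [Pi.add_apply, smul_add, smul_smul, s, t]
    congr 2 <;> field_simp
  calc orliczModular μ φ (fun ω => (a + b)⁻¹ • (u + v) ω)
      ≤ ∫⁻ ω, ENNReal.ofReal s * φ ω (a⁻¹ • u ω) + ENNReal.ofReal t * φ ω (b⁻¹ • v ω) ∂μ :=
        lintegral_mono_ae hconv
    _ = ENNReal.ofReal s * orliczModular μ φ (fun ω => a⁻¹ • u ω)
          + ENNReal.ofReal t * orliczModular μ φ (fun ω => b⁻¹ • v ω) := by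
        rw [orliczModular, orliczModular,
          lintegral_add_left ((hφ.meas_comp (fun ω => a⁻¹ • u ω) (hu.const_smul a⁻¹)).const_mul _),
          lintegral_const_mul' _ _ ofReal_ne_top, lintegral_const_mul' _ _ ofReal_ne_top]
    _ ≤ ENNReal.ofReal s * 1 + ENNReal.ofReal t * 1 := by gcongr
    _ = 1 := by
        rw [mul_one, mul_one, ← ENNReal.ofReal_add (by positivity) (by positivity), hst,
          ENNReal.ofReal_one]

theorem luxNorm_add_le (hφ : IsOrliczIntegrand μ φ) {u v : Ω → X} (hu : StronglyMeasurable u) :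
    luxNorm μ φ (u + v) ≤ luxNorm μ φ u + luxNorm μ φ v :=
  ENNReal.le_iInf_add_iInf fun ⟨a, ha, hma⟩ ⟨b, hb, hmb⟩ => by
    rw [← ENNReal.ofReal_add ha.le hb.le]
    exact luxNorm_le_ofReal (add_pos ha hb) (orliczModular_add_le_one hφ hu ha hb hma hmb)

theorem orliczModular_inv_abs_mul_smul (hφ : IsOrliczIntegrand μ φ) {c : ℝ} (hc : c ≠ 0)
    (a : ℝ) (u : Ω → X) :
    orliczModular μ φ (fun ω => (|c| * a)⁻¹ • (c • u) ω)
      = orliczModular μ φ (fun ω => a⁻¹ • u ω) := by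
  refine lintegral_congr_ae ?_
  filter_upwards [hφ.ae_even] with ω heven
  rcases abs_choice c with h | h <;>
    simp [h, smul_smul, mul_comm, hc, heven]

theorem luxNorm_smul_le (hφ : IsOrliczIntegrand μ φ) {c : ℝ} (hc : c ≠ 0) (u : Ω → X) :
    luxNorm μ φ (c • u) ≤ ENNReal.ofReal |c| * luxNorm μ φ u := by
  rw [luxNorm, luxNorm, ENNReal.mul_iInf_of_ne (by simpa using hc) ofReal_ne_top]
  refine le_iInf fun ⟨a, ha, hm⟩ => ?_
  rw [← ENNReal.ofReal_mul (abs_nonneg c)]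
  exact luxNorm_le_ofReal (mul_pos (abs_pos.2 hc) ha)
    ((orliczModular_inv_abs_mul_smul hφ hc a u).trans_le hm)

theorem memOrlicz_zero (hφ : IsOrliczIntegrand μ φ) : MemOrlicz μ φ (0 : Ω → X) := by
  refine ⟨stronglyMeasurable_const, (luxNorm_le_ofReal one_pos ?_).trans_lt ofReal_lt_top⟩
  refine (lintegral_congr_ae ?_).trans_le (lintegral_zero.trans_le zero_le_one)
  filter_upwards [hφ.ae_apply_zero_s8] with ω h
  simp [h]

theorem MemOrlicz.add (hφ : IsOrliczIntegrand μ φ) {u v : Ω → X}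
    (hu : MemOrlicz μ φ u) (hv : MemOrlicz μ φ v) : MemOrlicz μ φ (u + v) :=
  ⟨hu.1.add hv.1, (luxNorm_add_le hφ hu.1).trans_lt (add_lt_top.2 ⟨hu.2, hv.2⟩)⟩

theorem MemOrlicz.const_smul (hφ : IsOrliczIntegrand μ φ) {u : Ω → X}
    (hu : MemOrlicz μ φ u) (c : ℝ) : MemOrlicz μ φ (c • u) := by
  rcases eq_or_ne c 0 with rfl | hc
  · simpa using memOrlicz_zero hφ
  · exact ⟨hu.1.const_smul c,
      (luxNorm_smul_le hφ hc u).trans_lt (mul_lt_top ofReal_lt_top hu.2)⟩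

theorem ae_eq_zero_of_orliczModular_smul_le (hφ : IsOrliczIntegrand μ φ) {w : Ω → X}
    (hw : StronglyMeasurable w) {t : ℕ → ℝ} (ht : Tendsto t atTop atTop) {C : ℝ≥0∞}
    (hC : C ≠ ⊤) (hmod : ∀ k, orliczModular μ φ (fun ω => t k • w ω) ≤ C) :
    ∀ᵐ ω ∂μ, w ω = 0 := by
  have hmeas : ∀ k, Measurable fun ω => φ ω (t k • w ω) :=
    fun k => hφ.meas_comp _ (hw.const_smul _)
  have hfatou : ∫⁻ ω, liminf (fun k => φ ω (t k • w ω)) atTop ∂μ ≤ C :=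
    (lintegral_liminf_le hmeas).trans <|
      (liminf_le_liminf (.of_forall hmod)).trans_eq (liminf_const C)
  have hfin : ∀ᵐ ω ∂μ, liminf (fun k => φ ω (t k • w ω)) atTop < ⊤ :=
    ae_lt_top (.liminf hmeas) (ne_top_of_le_ne_top hC hfatou)
  filter_upwards [hfin, hφ.ae_coercive] with ω hfin hcoer
  by_contra hne
  have hnorm : Tendsto (fun k => t k • w ω) atTop (comap norm atTop) := by
    refine tendsto_comap_iff.2 <|
      ((tendsto_abs_atTop_atTop.comp ht).atTop_mul_const (norm_pos_iff.2 hne)).congr fun k => ?_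
    simp [norm_smul]
  exact hfin.ne ((hcoer.comp hnorm).liminf_eq)

theorem ae_eq_zero_of_luxNorm_eq_zero (hφ : IsOrliczIntegrand μ φ) {w : Ω → X}
    (hw : StronglyMeasurable w) (h : luxNorm μ φ w = 0) : ∀ᵐ ω ∂μ, w ω = 0 := by
  have hseq : ∀ k : ℕ, ∃ a : ℝ, 0 < a ∧ orliczModular μ φ (fun ω => a⁻¹ • w ω) ≤ 1 ∧
      ENNReal.ofReal a < ENNReal.ofReal ((k + 1)⁻¹) := fun k =>
    exists_orliczModular_le_one_of_luxNorm_lt (h ▸ ofReal_pos.2 (by positivity))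
  choose a ha hmod hlt using hseq
  have hk : ∀ k : ℕ, (k : ℝ) ≤ (a k)⁻¹ := fun k => by
    have := (ofReal_lt_ofReal_iff (by positivity)).1 (hlt k)
    rw [lt_inv_comm₀ (ha k) (by positivity)] at this
    linarith
  exact ae_eq_zero_of_orliczModular_smul_le hφ hw
    (tendsto_atTop_mono hk tendsto_natCast_atTop_atTop) one_ne_top hmod

theorem SigmaFiniteConc.of_tendsto_luxNorm (hφ : IsOrliczIntegrand μ φ) {u : ℕ → Ω → X}
    {v : Ω → X} (hu : ∀ n, SigmaFiniteConc μ (u n)) (hv : StronglyMeasurable v)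
    (htend : Tendsto (fun n => luxNorm μ φ (u n - v)) atTop (𝓝 0)) :
    SigmaFiniteConc μ v := by
  choose g hg hug using fun n => sigmaFiniteConc_iff.1 (hu n)
  set T := ⋃ n, ⋃ k, g n k
  have hT : MeasurableSet T := .iUnion fun n => .iUnion fun k => (hg n k).1
  set w := Tᶜ.indicator (-v)
  have hw_le : ∀ n, luxNorm μ φ w ≤ luxNorm μ φ (u n - v) := fun n =>
    luxNorm_le_of_ae_eq_zero_or_eq hφ <| by
      filter_upwards [hug n] with ω hω
      by_cases hωT : ω ∈ T
      · exact .inl (Set.indicator_of_notMem (Set.notMem_compl_iff.2 hωT) _)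
      · have hωn : ω ∉ ⋃ k, g n k := fun h => hωT (Set.mem_iUnion.2 ⟨n, h⟩)
        exact .inr (by simp [w, Set.indicator_of_mem (Set.mem_compl hωT), hω hωn])
  have hw : ∀ᵐ ω ∂μ, w ω = 0 := ae_eq_zero_of_luxNorm_eq_zero hφ (hv.neg.indicator hT.compl)
    (le_antisymm (ge_of_tendsto' htend hw_le) zero_le)
  refine sigmaFiniteConc_iff.2 ⟨fun k => g k.unpair.1 k.unpair.2, fun k => hg _ _, ?_⟩
  filter_upwards [hw] with ω hω hωT
  rw [Set.iUnion_unpair (fun n k => g n k)] at hωT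
  change ω ∉ T at hωT
  simpa [w, hωT] using hω

end Orlicz

/-- `L_φ^σ(μ)`, the set of elements of `L_φ(μ)` vanishing outside a σ-finite
set, is a linear subspace of `L_φ(μ)` which is closed under convergence in the
Luxemburg norm. -/
theorem sigmaFiniteConc_closed_subspace {Ω X : Type*} [MeasurableSpace Ω]
    [NormedAddCommGroup X] [NormedSpace ℝ X]
    (μ : Measure Ω) (φ : Ω → X → ℝ≥0∞) (hφ : IsOrliczIntegrand μ φ) :
    (MemOrlicz μ φ (0 : Ω → X) ∧ SigmaFiniteConc μ (0 : Ω → X)) ∧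
    (∀ u v : Ω → X, MemOrlicz μ φ u ∧ SigmaFiniteConc μ u →
      MemOrlicz μ φ v ∧ SigmaFiniteConc μ v →
      MemOrlicz μ φ (u + v) ∧ SigmaFiniteConc μ (u + v)) ∧
    (∀ (c : ℝ) (u : Ω → X), MemOrlicz μ φ u ∧ SigmaFiniteConc μ u →
      MemOrlicz μ φ (c • u) ∧ SigmaFiniteConc μ (c • u)) ∧
    (∀ (u : ℕ → Ω → X) (v : Ω → X),
      (∀ n, MemOrlicz μ φ (u n) ∧ SigmaFiniteConc μ (u n)) → MemOrlicz μ φ v →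
      Tendsto (fun n => luxNorm μ φ (u n - v)) atTop (nhds 0) →
      SigmaFiniteConc μ v) :=
  ⟨⟨memOrlicz_zero hφ, sigmaFiniteConc_zero⟩,
    fun _ _ hu hv => ⟨hu.1.add hφ hv.1, hu.2.add hv.2⟩,
    fun c _ hu => ⟨hu.1.const_smul hφ c, hu.2.const_smul c⟩,
    fun _ _ hu hv htend => .of_tendsto_luxNorm hφ (fun n => (hu n).2) hv.1 htend⟩
end

section
/- If the domain $\dom I_\varphi = \{u \in L_\varphi(\mu) : I_\varphi(u) < \infty\}$ is a linear subspace, then every element of $L_\varphi(\mu)$ has absolutely continuous norm and vanishes outside a $\sigma$-finite set, i.e. $L_\varphi(\mu) = C_\varphi^\sigma(\mu)$. -/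
open MeasureTheory Filter Topology ENNReal

/-- `u` has absolutely continuous norm: `‖u χ_{E_n}‖_φ → 0` for every sequence of
measurable sets with `χ_{E_n} → 0` a.e. -/
def AbsContNorm {Ω X : Type*} [MeasurableSpace Ω]
    [NormedAddCommGroup X] [NormedSpace ℝ X]
    (μ : MeasureTheory.Measure Ω) (φ : Ω → X → ℝ≥0∞) (u : Ω → X) : Prop :=
  ∀ E : ℕ → Set Ω, (∀ n, MeasurableSet (E n)) →
    (∀ᵐ ω ∂μ, ∀ᶠ n in Filter.atTop, ω ∉ E n) →
    Filter.Tendsto (fun n => luxNorm μ φ ((E n).indicator u)) Filter.atTop (nhds 0)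

/-- If `dom I_φ = {u ∈ L_φ(μ) : I_φ(u) < ∞}` is a linear subspace, then
every element of `L_φ(μ)` has absolutely continuous norm and vanishes off a σ-finite
set, i.e. `L_φ(μ) = C_φ^σ(μ)`. -/
theorem linear_domain_implies_Csigma {Ω X : Type*} [MeasurableSpace Ω]
    [NormedAddCommGroup X] [NormedSpace ℝ X]
    (μ : Measure Ω) (φ : Ω → X → ℝ≥0∞) (hφ : IsOrliczIntegrand μ φ)
    (hadd : ∀ u v : Ω → X,
      MemOrlicz μ φ u ∧ orliczModular μ φ u < ⊤ →
      MemOrlicz μ φ v ∧ orliczModular μ φ v < ⊤ →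
      orliczModular μ φ (u + v) < ⊤)
    (hsmul : ∀ (c : ℝ) (u : Ω → X),
      MemOrlicz μ φ u ∧ orliczModular μ φ u < ⊤ →
      orliczModular μ φ (c • u) < ⊤) :
    ∀ u : Ω → X, MemOrlicz μ φ u → AbsContNorm μ φ u ∧ SigmaFiniteConc μ u := by
  intro u hu
  obtain ⟨hum, hlt⟩ := hu
  -- extract a witness from finiteness of the Luxemburg norm
  have hne : Nonempty {a : ℝ // 0 < a ∧ orliczModular μ φ (fun ω => a⁻¹ • u ω) ≤ 1} := by
    by_contra h
    rw [not_nonempty_iff] at h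
    rw [luxNorm, iInf_of_empty] at hlt
    exact absurd hlt (lt_irrefl _)
  obtain ⟨⟨a, ha, hIa⟩⟩ := hne
  set v : Ω → X := fun ω => a⁻¹ • u ω with hv
  have hvm : StronglyMeasurable v := hum.const_smul _
  have hvlux : luxNorm μ φ v < ⊤ := by
    refine lt_of_le_of_lt (iInf_le _ ⟨1, one_pos, ?_⟩) (by simp)
    simpa [orliczModular] using hIa
  have hvmod : orliczModular μ φ v < ⊤ := lt_of_le_of_lt hIa ENNReal.one_lt_top
  have hmemv : MemOrlicz μ φ v ∧ orliczModular μ φ v < ⊤ := ⟨⟨hvm, hvlux⟩, hvmod⟩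
  -- key consequence of linearity of the domain: all scalar multiples of u have finite modular
  have key : ∀ c : ℝ, orliczModular μ φ (fun ω => c • u ω) < ⊤ := by
    intro c
    have h1 := hsmul (c * a) v hmemv
    have heq : (c * a) • v = fun ω => c • u ω := by
      funext ω
      show (c * a) • a⁻¹ • u ω = c • u ω
      rw [smul_smul]
      congr 1
      field_simp
    rwa [heq] at h1
  -- a.e. φ ω 0 = 0
  have hzero : ∀ᵐ ω ∂μ, φ ω 0 = 0 := by
    filter_upwards [hφ.ae_zero] with ω h
    by_contra h0
    have hmem : {φ ω 0}ᶜ ∈ nhds (0 : ℝ≥0∞) :=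
      isOpen_compl_singleton.mem_nhds (Ne.symm h0)
    have hpre := h hmem
    rw [Filter.mem_map] at hpre
    exact (mem_of_mem_nhds hpre : (0 : X) ∈ _) rfl
  constructor
  · -- Absolutely continuous norm
    intro E hEmeas hEae
    rw [ENNReal.tendsto_nhds_zero]
    intro ε hε
    set ε' := min ε 1 with hε'
    have hε'top : ε' ≠ ⊤ := ne_top_of_le_ne_top ENNReal.one_ne_top (min_le_right _ _)
    have hε'0 : ε' ≠ 0 := ne_of_gt (lt_min hε one_pos)
    set δ := ε'.toReal with hδdef
    have hδ : 0 < δ := ENNReal.toReal_pos hε'0 hε'top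
    have hIδ : orliczModular μ φ (fun ω => δ⁻¹ • u ω) < ⊤ := key δ⁻¹
    set F : ℕ → Ω → ℝ≥0∞ := fun n ω => φ ω (δ⁻¹ • (E n).indicator u ω) with hF
    have hFmeas : ∀ n, Measurable (F n) := fun n =>
      hφ.meas_comp _ ((hum.indicator (hEmeas n)).const_smul _)
    have hbound : ∀ n, F n ≤ᵐ[μ] fun ω => φ ω (δ⁻¹ • u ω) := by
      intro n
      filter_upwards [hzero] with ω h0
      by_cases hωE : ω ∈ E n
      · simp [hF, Set.indicator_of_mem hωE]
      · simp [hF, Set.indicator_of_notMem hωE, h0]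
    have hlim : ∀ᵐ ω ∂μ, Filter.Tendsto (fun n => F n ω) Filter.atTop (nhds 0) := by
      filter_upwards [hzero, hEae] with ω h0 hE
      have hev : ∀ᶠ n in Filter.atTop, F n ω = 0 := by
        filter_upwards [hE] with n hn
        simp [hF, Set.indicator_of_notMem hn, h0]
      exact Filter.Tendsto.congr' (hev.mono fun n hn => hn.symm) tendsto_const_nhds
    have hTend : Filter.Tendsto (fun n => ∫⁻ ω, F n ω ∂μ) Filter.atTop
        (nhds (∫⁻ _ω, (0 : ℝ≥0∞) ∂μ)) :=
      tendsto_lintegral_of_dominated_convergence _ hFmeas hbound hIδ.ne hlim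
    rw [lintegral_zero] at hTend
    have h1 : ∀ᶠ n in Filter.atTop, ∫⁻ ω, F n ω ∂μ ≤ 1 :=
      hTend.eventually (eventually_le_nhds one_pos)
    filter_upwards [h1] with n hn
    have hle : luxNorm μ φ ((E n).indicator u) ≤ ENNReal.ofReal δ :=
      iInf_le _ (⟨δ, hδ, hn⟩ :
        {b : ℝ // 0 < b ∧ orliczModular μ φ (fun ω => b⁻¹ • (E n).indicator u ω) ≤ 1})
    calc luxNorm μ φ ((E n).indicator u) ≤ ENNReal.ofReal δ := hle
      _ = ε' := ENNReal.ofReal_toReal hε'top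
      _ ≤ ε := min_le_left _ _
  · -- σ-finite concentration
    set g : ℕ → Set Ω := fun n => {ω | 1 ≤ φ ω ((n : ℝ) • u ω)} with hg
    have hgm : ∀ n, MeasurableSet (g n) := fun n =>
      measurableSet_le measurable_const (hφ.meas_comp _ (hum.const_smul _))
    have hgfin : ∀ n, μ (g n) < ⊤ := by
      intro n
      have hmk := meas_ge_le_lintegral_div
        (μ := μ) (f := fun ω => φ ω ((n : ℝ) • u ω))
        (hφ.meas_comp _ (hum.const_smul _)).aemeasurable one_ne_zero ENNReal.one_ne_top
      calc μ (g n) ≤ (∫⁻ ω, φ ω ((n : ℝ) • u ω) ∂μ) / 1 := hmk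
        _ < ⊤ := by simpa [orliczModular] using key (n : ℝ)
    refine ⟨⋃ n, g n, MeasurableSet.iUnion hgm, ⟨g, rfl, fun n => ⟨hgm n, hgfin n⟩⟩, ?_⟩
    filter_upwards [hφ.ae_coercive] with ω hco hωS
    by_contra hu0
    have hnorm : Filter.Tendsto (fun n : ℕ => ‖(n : ℝ) • u ω‖) Filter.atTop Filter.atTop := by
      have : (fun n : ℕ => ‖(n : ℝ) • u ω‖) = fun n : ℕ => (n : ℝ) * ‖u ω‖ := by
        funext n
        rw [norm_smul]
        simp
      rw [this]
      exact tendsto_natCast_atTop_atTop.atTop_mul_const (norm_pos_iff.2 hu0)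
    have hcomap : Filter.Tendsto (fun n : ℕ => (n : ℝ) • u ω) Filter.atTop
        (Filter.comap norm Filter.atTop) := by
      rw [Filter.tendsto_comap_iff]
      exact hnorm
    have htop := hco.comp hcomap
    have hev : ∀ᶠ n : ℕ in Filter.atTop, 1 ≤ φ ω ((n : ℝ) • u ω) :=
      htop.eventually (eventually_ge_nhds ENNReal.one_lt_top)
    obtain ⟨n, hn⟩ := hev.exists
    exact hωS (Set.mem_iUnion.2 ⟨n, hn⟩)
end

section
/- Let $\mu$ be a measure and $\nu$ a finite measure on $(\Omega, \mathcal{A})$. Define $\nu_a(A) = \sup\{\int_A u\,d\mu : u \colon \Omega \to [0,\infty] \text{ measurable}, \int_E u\,d\mu \le \nu(E) \text{ for all measurable } E \subset A\}$. Then there exists a $\mu$-$\sigma$-finite set $\Sigma \in \mathcal{A}$ such that $\nu_a(A) = \nu_a(A \cap \Sigma)$ for all $A \in \mathcal{A}$. -/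
/-!
Subdensities (measurable `u` with `∫_E u dμ ≤ ν E` for all measurable `E ⊆ A`) are closed under
countable suprema, so the supremum defining `ν_a(Ω)` is attained by some `u`, and `∫ u dμ ≤ ν Ω < ∞`.
By Markov's inequality `Σ = {u > 0}` is `μ`-σ-finite. A subdensity `v` on `A \ Σ` has zero
integral: `u + 1_{A \ Σ} v = max u (1_{A \ Σ} v)` is again a subdensity, so its integral is at most
`∫ u dμ`, which is finite.
-/

open MeasureTheory ENNReal

/-- The absolutely continuous part of `ν` with respect to `μ` in the de Giorgi
decomposition. -/
noncomputable def acPart {Ω : Type*} [MeasurableSpace Ω]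
    (μ ν : Measure Ω) (A : Set Ω) : ℝ≥0∞ :=
  ⨆ (u : Ω → ℝ≥0∞) (_ : Measurable u)
    (_ : ∀ E ⊆ A, MeasurableSet E → ∫⁻ ω in E, u ω ∂μ ≤ ν E),
    ∫⁻ ω in A, u ω ∂μ

namespace MeasureTheory

variable {Ω : Type*} [MeasurableSpace Ω] {μ ν : Measure Ω} {A B : Set Ω} {u v : Ω → ℝ≥0∞}

/-- The competitors in the supremum defining `acPart μ ν A`. -/
def IsSubdensityOn (μ ν : Measure Ω) (A : Set Ω) (u : Ω → ℝ≥0∞) : Prop :=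
  Measurable u ∧ ∀ E ⊆ A, MeasurableSet E → ∫⁻ ω in E, u ω ∂μ ≤ ν E

namespace IsSubdensityOn

lemma zero : IsSubdensityOn μ ν A 0 :=
  ⟨measurable_const, fun E _ _ => by simp⟩

lemma mono (hu : IsSubdensityOn μ ν A u) (hBA : B ⊆ A) : IsSubdensityOn μ ν B u :=
  ⟨hu.1, fun E hE => hu.2 E (hE.trans hBA)⟩

lemma indicator (hu : IsSubdensityOn μ ν A u) (hB : MeasurableSet B) (hBA : B ⊆ A) :
    IsSubdensityOn μ ν Set.univ (B.indicator u) := by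
  refine ⟨hu.1.indicator hB, fun E _ hE => ?_⟩
  rw [lintegral_indicator hB, Measure.restrict_restrict hB]
  exact (hu.2 _ (Set.inter_subset_left.trans hBA) (hB.inter hE)).trans
    (measure_mono Set.inter_subset_right)

lemma sup (hu : IsSubdensityOn μ ν A u) (hv : IsSubdensityOn μ ν A v) :
    IsSubdensityOn μ ν A (u ⊔ v) := by
  refine ⟨hu.1.sup hv.1, fun E hEA hE => ?_⟩
  have hle : MeasurableSet {ω | u ω ≤ v ω} := measurableSet_le hu.1 hv.1
  have hlt : MeasurableSet {ω | v ω < u ω} := measurableSet_lt hv.1 hu.1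
  have hdiff : E ∩ {ω | v ω < u ω} = E \ {ω | u ω ≤ v ω} := by
    ext ω; simp [not_le]
  calc ∫⁻ ω in E, (u ⊔ v) ω ∂μ
      = ∫⁻ ω in E ∩ {ω | u ω ≤ v ω}, v ω ∂μ + ∫⁻ ω in E ∩ {ω | v ω < u ω}, u ω ∂μ :=
        setLIntegral_max hu.1 hv.1 E
    _ ≤ ν (E ∩ {ω | u ω ≤ v ω}) + ν (E ∩ {ω | v ω < u ω}) :=
        add_le_add (hv.2 _ (Set.inter_subset_left.trans hEA) (hE.inter hle))
          (hu.2 _ (Set.inter_subset_left.trans hEA) (hE.inter hlt))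
    _ = ν E := by rw [hdiff, measure_inter_add_sdiff E hle]

lemma iSup {u : ℕ → Ω → ℝ≥0∞} (hu : ∀ n, IsSubdensityOn μ ν A (u n)) :
    IsSubdensityOn μ ν A (⨆ n, u n) := by
  have hpartial : ∀ n, IsSubdensityOn μ ν A (partialSups u n) := fun n => by
    rw [partialSups_apply]
    exact Finset.sup'_induction _ _ (fun _ h₁ _ h₂ => h₁.sup h₂) fun k _ => hu k
  have hsup : (⨆ n, u n) = fun ω => ⨆ n, partialSups u n ω := by
    rw [← iSup_partialSups_eq]; ext ω; exact iSup_apply ..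
  rw [hsup]
  refine ⟨Measurable.iSup fun n => (hpartial n).1, fun E hEA hE => ?_⟩
  rw [lintegral_iSup (fun n => (hpartial n).1) (partialSups u).monotone]
  exact iSup_le fun n => (hpartial n).2 E hEA hE

end IsSubdensityOn

lemma le_acPart (hu : IsSubdensityOn μ ν A u) : ∫⁻ ω in A, u ω ∂μ ≤ acPart μ ν A :=
  le_iSup₂_of_le u hu.1 (le_iSup_of_le hu.2 le_rfl)

lemma acPart_le {c : ℝ≥0∞} (h : ∀ u, IsSubdensityOn μ ν A u → ∫⁻ ω in A, u ω ∂μ ≤ c) :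
    acPart μ ν A ≤ c :=
  iSup₂_le fun u hu => iSup_le fun hadm => h u ⟨hu, hadm⟩

lemma acPart_le_measure (hA : MeasurableSet A) : acPart μ ν A ≤ ν A :=
  acPart_le fun _ hu => hu.2 A le_rfl hA

lemma acPart_mono (hB : MeasurableSet B) (hBA : B ⊆ A) : acPart μ ν B ≤ acPart μ ν A :=
  acPart_le fun u hu => by
    have h := le_acPart ((hu.indicator hB subset_rfl).mono (Set.subset_univ A))
    rwa [lintegral_indicator hB, Measure.restrict_restrict hB, Set.inter_eq_left.2 hBA] at h

lemma exists_isSubdensityOn_lintegral_eq_acPart (μ ν : Measure Ω) (A : Set Ω) :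
    ∃ u, IsSubdensityOn μ ν A u ∧ ∫⁻ ω in A, u ω ∂μ = acPart μ ν A := by
  set I := (fun u => ∫⁻ ω in A, u ω ∂μ) '' {u | IsSubdensityOn μ ν A u}
  have hI : acPart μ ν A = sSup I := by
    simp only [I, sSup_image, Set.mem_ofPred_eq, IsSubdensityOn, iSup_and]
    rfl
  obtain ⟨x, -, hx_lim, hxI⟩ :=
    exists_seq_tendsto_sSup (S := I) ⟨_, 0, IsSubdensityOn.zero, rfl⟩ (OrderTop.bddAbove I)
  choose u hu hux using hxI
  refine ⟨⨆ n, u n, IsSubdensityOn.iSup hu, le_antisymm (le_acPart (IsSubdensityOn.iSup hu)) ?_⟩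
  rw [hI]
  refine le_of_tendsto' hx_lim fun n => ?_
  rw [← hux n]
  exact lintegral_mono (le_iSup u n)

lemma IsSubdensityOn.setLIntegral_eq_zero_of_eqOn_zero_of_maximizer
    (hv : IsSubdensityOn μ ν B v) (hB : MeasurableSet B) (hu : IsSubdensityOn μ ν Set.univ u)
    (hmax : ∫⁻ ω, u ω ∂μ = acPart μ ν Set.univ) (hfin : ∫⁻ ω, u ω ∂μ ≠ ∞)
    (huB : Set.EqOn u 0 B) : ∫⁻ ω in B, v ω ∂μ = 0 := by
  have hf := hv.indicator hB subset_rfl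
  have hadd : B.indicator v + u = B.indicator v ⊔ u := by
    ext ω
    by_cases hω : ω ∈ B
    · simp [hω, huB hω]
    · simp [hω]
  have hle : ∫⁻ ω in B, v ω ∂μ + ∫⁻ ω, u ω ∂μ ≤ 0 + ∫⁻ ω, u ω ∂μ :=
    calc ∫⁻ ω in B, v ω ∂μ + ∫⁻ ω, u ω ∂μ = ∫⁻ ω, (B.indicator v ⊔ u) ω ∂μ := by
          rw [← hadd, ← lintegral_indicator hB, ← lintegral_add_left hf.1]; rfl
      _ ≤ acPart μ ν Set.univ := by simpa using le_acPart (hf.sup hu)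
      _ = 0 + ∫⁻ ω, u ω ∂μ := by rw [hmax, zero_add]
  exact nonpos_iff_eq_zero.1 (ENNReal.le_of_add_le_add_right hfin hle)

lemma acPart_eq_acPart_inter {S : Set Ω} (hA : MeasurableSet A) (hS : MeasurableSet S)
    (h : ∀ v, IsSubdensityOn μ ν (A \ S) v → ∫⁻ ω in A \ S, v ω ∂μ = 0) :
    acPart μ ν A = acPart μ ν (A ∩ S) := by
  refine le_antisymm (acPart_le fun v hv => ?_) (acPart_mono (hA.inter hS) Set.inter_subset_left)
  calc ∫⁻ ω in A, v ω ∂μ = ∫⁻ ω in A ∩ S, v ω ∂μ + ∫⁻ ω in A \ S, v ω ∂μ :=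
        (lintegral_inter_add_sdiff v A hS).symm
    _ = ∫⁻ ω in A ∩ S, v ω ∂μ := by rw [h v (hv.mono Set.sdiff_subset), add_zero]
    _ ≤ acPart μ ν (A ∩ S) := le_acPart (hv.mono Set.inter_subset_left)

lemma exists_iUnion_eq_setOf_pos_measure_lt_top (hu : Measurable u)
    (hfin : ∫⁻ ω, u ω ∂μ ≠ ∞) :
    ∃ g : ℕ → Set Ω, {ω | 0 < u ω} = ⋃ n, g n ∧ ∀ n, MeasurableSet (g n) ∧ μ (g n) < ⊤ := by
  refine ⟨fun n => {ω | ((n : ℝ≥0∞) + 1)⁻¹ ≤ u ω}, ?_,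
    fun n => ⟨measurableSet_le measurable_const hu, ?_⟩⟩
  · ext ω
    simp only [Set.mem_ofPred_eq, Set.mem_iUnion]
    constructor
    · intro hω
      obtain ⟨n, hn⟩ := ENNReal.exists_inv_nat_lt hω.ne'
      exact ⟨n, (ENNReal.inv_le_inv.2 le_self_add).trans hn.le⟩
    · rintro ⟨n, hn⟩
      exact (ENNReal.inv_pos.2 (by simp)).trans_le hn
  · have hε : ((n : ℝ≥0∞) + 1)⁻¹ ≠ 0 := by simp
    calc μ {ω | ((n : ℝ≥0∞) + 1)⁻¹ ≤ u ω} ≤ (∫⁻ ω, u ω ∂μ) / ((n : ℝ≥0∞) + 1)⁻¹ :=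
          meas_ge_le_lintegral_div hu.aemeasurable hε (by simp)
      _ < ⊤ := ENNReal.div_lt_top hfin hε

end MeasureTheory

/-- If `ν` is a finite measure, the absolutely continuous part `ν_a` is
concentrated on a `μ`-σ-finite set: there is a measurable `μ`-σ-finite `Σ` with
`ν_a(A) = ν_a(A ∩ Σ)` for all measurable `A`. -/
theorem acPart_sigma_finite_concentration {Ω : Type*} [MeasurableSpace Ω]
    (μ ν : Measure Ω) [IsFiniteMeasure ν] :
    ∃ S : Set Ω, MeasurableSet S ∧
      (∃ g : ℕ → Set Ω, S = ⋃ n, g n ∧ ∀ n, MeasurableSet (g n) ∧ μ (g n) < ⊤) ∧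
      ∀ A : Set Ω, MeasurableSet A → acPart μ ν A = acPart μ ν (A ∩ S) := by
  obtain ⟨u, hu, hmax⟩ := exists_isSubdensityOn_lintegral_eq_acPart μ ν Set.univ
  rw [Measure.restrict_univ] at hmax
  have hfin : ∫⁻ ω, u ω ∂μ ≠ ∞ :=
    (hmax.trans_le (acPart_le_measure MeasurableSet.univ)).trans_lt (measure_lt_top ν _) |>.ne
  have hS : MeasurableSet {ω | 0 < u ω} := measurableSet_lt measurable_const hu.1
  refine ⟨_, hS, exists_iUnion_eq_setOf_pos_measure_lt_top hu.1 hfin, fun A hA => ?_⟩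
  refine acPart_eq_acPart_inter hA hS fun v hv => ?_
  refine hv.setLIntegral_eq_zero_of_eqOn_zero_of_maximizer (hA.diff hS) hu hmax hfin ?_
  intro ω hω
  simpa using hω.2
end

section
/- Let $\nu$ be a finite signed countably additive measure on $(\Omega,\mathcal{A})$ and $\mu$ a measure. Suppose $\nu = \nu_a^1 + \nu_d^1 + \nu_s^1 = \nu_a^2 + \nu_d^2 + \nu_s^2$ are two decompositions into finite signed measures where each $\nu_a^i$ is absolutely continuous w.r.t. $\mu$ and concentrated on a $\mu$-$\sigma$-finite set, each $\nu_d^i$ is diffuse w.r.t. $\mu$ (vanishes on every $\mu$-$\sigma$-finite set), and each $\nu_s^i$ is concentrated on a $\mu$-null set. Then $\nu_a^1 = \nu_a^2$, $\nu_d^1 = \nu_d^2$, and $\nu_s^1 = \nu_s^2$. -/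
open MeasureTheory ENNReal

variable {Ω : Type*} [MeasurableSpace Ω]

/-- A `μ`-σ-finite set: a countable union of sets of finite `μ`-measure. -/
def SigmaFiniteSet (μ : Measure Ω) (S : Set Ω) : Prop :=
  ∃ g : ℕ → Set Ω, S = ⋃ n, g n ∧ ∀ n, MeasurableSet (g n) ∧ μ (g n) < ⊤

/-- A signed measure `ρ` is concentrated on `S` if `ρ(A) = ρ(A ∩ S)` for all
measurable `A`. -/
def ConcentratedOn (ρ : SignedMeasure Ω) (S : Set Ω) : Prop :=
  MeasurableSet S ∧ ∀ A : Set Ω, MeasurableSet A → ρ A = ρ (A ∩ S)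

/-!
The two decompositions can be compared on a common pair of sets: the union `S` of the
σ-finite carriers of the absolutely continuous parts and the union `N` of the null carriers
of the singular parts. On measurable subsets of `N` the absolutely continuous and diffuse
parts vanish, so every singular part is `ν` restricted to `N`; on measurable subsets of
`S \ N` the diffuse and singular parts vanish, so every absolutely continuous part is `ν`
restricted to `S \ N`. The diffuse parts then agree by cancellation.
-/

namespace SigmaFiniteSet

variable {μ : Measure Ω}

theorem union {S T : Set Ω} (hS : SigmaFiniteSet μ S) (hT : SigmaFiniteSet μ T) :
    SigmaFiniteSet μ (S ∪ T) := by
  obtain ⟨g, rfl, hg⟩ := hS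
  obtain ⟨h, rfl, hh⟩ := hT
  exact ⟨fun n => g n ∪ h n, Set.iUnion_union_distrib g h |>.symm,
    fun n => ⟨(hg n).1.union (hh n).1, measure_union_lt_top (hg n).2 (hh n).2⟩⟩

theorem mono {S B : Set Ω} (hS : SigmaFiniteSet μ S) (hB : MeasurableSet B) (hBS : B ⊆ S) :
    SigmaFiniteSet μ B := by
  obtain ⟨g, rfl, hg⟩ := hS
  refine ⟨fun n => g n ∩ B, ?_, fun n => ⟨(hg n).1.inter hB, ?_⟩⟩
  · rw [← Set.iUnion_inter, Set.inter_eq_right.mpr hBS]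
  · exact (measure_mono Set.inter_subset_left).trans_lt (hg n).2

theorem of_measure_eq_zero {B : Set Ω} (hB : MeasurableSet B) (hB0 : μ B = 0) :
    SigmaFiniteSet μ B :=
  ⟨fun _ => B, (Set.iUnion_const B).symm, fun _ => ⟨hB, by simp [hB0]⟩⟩

end SigmaFiniteSet

namespace ConcentratedOn

variable {ρ : SignedMeasure Ω}

theorem mono {T S : Set Ω} (h : ConcentratedOn ρ T) (hS : MeasurableSet S) (hTS : T ⊆ S) :
    ConcentratedOn ρ S := by
  refine ⟨hS, fun A hA => ?_⟩
  rw [h.2 A hA, h.2 (A ∩ S) (hA.inter hS), Set.inter_assoc, Set.inter_eq_right.mpr hTS]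

theorem apply_eq_zero_of_disjoint {N A : Set Ω} (h : ConcentratedOn ρ N) (hA : MeasurableSet A)
    (hAN : Disjoint A N) : ρ A = 0 := by
  rw [h.2 A hA, hAN.inter_eq, VectorMeasure.empty]

theorem sdiff {S N : Set Ω} (h : ConcentratedOn ρ S) (hN : MeasurableSet N)
    (hρN : ∀ A, MeasurableSet A → A ⊆ N → ρ A = 0) : ConcentratedOn ρ (S \ N) := by
  refine ⟨h.1.diff hN, fun A hA => ?_⟩
  have hAS : MeasurableSet (A ∩ S) := hA.inter h.1
  have hsplit := VectorMeasure.of_add_of_sdiff (v := ρ) (hAS.inter hN) hAS Set.inter_subset_left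
  rw [hρN _ (hAS.inter hN) Set.inter_subset_right, zero_add, Set.sdiff_self_inter] at hsplit
  rw [h.2 A hA, ← hsplit, Set.inter_sdiff_assoc]

end ConcentratedOn

theorem SignedMeasure.restrict_add_eq_of_concentratedOn {ρ ρ' : SignedMeasure Ω} {T : Set Ω}
    (hρ : ConcentratedOn ρ T) (hρ' : ∀ A, MeasurableSet A → A ⊆ T → ρ' A = 0) :
    (ρ + ρ').restrict T = ρ := by
  refine VectorMeasure.ext fun A hA => ?_
  rw [VectorMeasure.restrict_apply _ hρ.1 hA, add_apply,
    hρ' _ (hA.inter hρ.1) Set.inter_subset_right, add_zero, ← hρ.2 A hA]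

theorem deGiorgi_parts_eq_restrict {μ : Measure Ω} {ν νa νd νs : SignedMeasure Ω} {S N : Set Ω}
    (hsum : ν = νa + νd + νs) (hac : ∀ A, MeasurableSet A → μ A = 0 → νa A = 0)
    (hd : ∀ A, MeasurableSet A → SigmaFiniteSet μ A → νd A = 0)
    (hS : SigmaFiniteSet μ S) (haS : ConcentratedOn νa S)
    (hN : MeasurableSet N) (hN0 : μ N = 0) (hsN : ConcentratedOn νs N) :
    νa = ν.restrict (S \ N) ∧ νs = ν.restrict N := by
  have hnull {A : Set Ω} (hAN : A ⊆ N) : μ A = 0 := measure_mono_null hAN hN0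
  constructor
  · have haSN : ConcentratedOn νa (S \ N) :=
      haS.sdiff hN fun A hA hAN => hac A hA (hnull hAN)
    rw [hsum, add_assoc, SignedMeasure.restrict_add_eq_of_concentratedOn haSN]
    intro A hA hASN
    rw [add_apply, hd A hA (hS.mono hA (hASN.trans Set.sdiff_subset)),
      hsN.apply_eq_zero_of_disjoint hA (Set.disjoint_sdiff_left.mono_left hASN), add_zero]
  · rw [hsum, add_comm, SignedMeasure.restrict_add_eq_of_concentratedOn hsN]
    intro A hA hAN
    rw [add_apply, hac A hA (hnull hAN),
      hd A hA (.of_measure_eq_zero hA (hnull hAN)), add_zero]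

/-- Uniqueness of the de Giorgi decomposition
`ν = ν_a + ν_d + ν_s` of a finite signed measure with respect to an arbitrary
measure `μ`, into an absolutely continuous part concentrated on a `μ`-σ-finite set,
a diffuse part (vanishing on every `μ`-σ-finite set), and a part concentrated on a
`μ`-null set. -/
theorem deGiorgi_decomposition_unique (μ : Measure Ω)
    (ν νa1 νd1 νs1 νa2 νd2 νs2 : SignedMeasure Ω)
    (hsum1 : ν = νa1 + νd1 + νs1) (hsum2 : ν = νa2 + νd2 + νs2)
    (ha1 : (∀ A : Set Ω, MeasurableSet A → μ A = 0 → νa1 A = 0) ∧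
      ∃ S : Set Ω, SigmaFiniteSet μ S ∧ ConcentratedOn νa1 S)
    (ha2 : (∀ A : Set Ω, MeasurableSet A → μ A = 0 → νa2 A = 0) ∧
      ∃ S : Set Ω, SigmaFiniteSet μ S ∧ ConcentratedOn νa2 S)
    (hd1 : ∀ A : Set Ω, MeasurableSet A → SigmaFiniteSet μ A → νd1 A = 0)
    (hd2 : ∀ A : Set Ω, MeasurableSet A → SigmaFiniteSet μ A → νd2 A = 0)
    (hs1 : ∃ N : Set Ω, MeasurableSet N ∧ μ N = 0 ∧ ConcentratedOn νs1 N)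
    (hs2 : ∃ N : Set Ω, MeasurableSet N ∧ μ N = 0 ∧ ConcentratedOn νs2 N) :
    νa1 = νa2 ∧ νd1 = νd2 ∧ νs1 = νs2 := by
  obtain ⟨hac1, S1, hS1, hc1⟩ := ha1
  obtain ⟨hac2, S2, hS2, hc2⟩ := ha2
  obtain ⟨N1, hN1, hN10, hn1⟩ := hs1
  obtain ⟨N2, hN2, hN20, hn2⟩ := hs2
  have hS := hS1.union hS2
  have hSm : MeasurableSet (S1 ∪ S2) := hc1.1.union hc2.1
  have hN : MeasurableSet (N1 ∪ N2) := hN1.union hN2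
  have hN0 : μ (N1 ∪ N2) = 0 := measure_union_null hN10 hN20
  obtain ⟨ha1, hs1⟩ := deGiorgi_parts_eq_restrict hsum1 hac1 hd1 hS
    (hc1.mono hSm Set.subset_union_left) hN hN0 (hn1.mono hN Set.subset_union_left)
  obtain ⟨ha2, hs2⟩ := deGiorgi_parts_eq_restrict hsum2 hac2 hd2 hS
    (hc2.mono hSm Set.subset_union_right) hN hN0 (hn2.mono hN Set.subset_union_right)
  have ha : νa1 = νa2 := ha1.trans ha2.symm
  have hs : νs1 = νs2 := hs1.trans hs2.symm
  have hsum : νa1 + νd1 + νs1 = νa1 + νd2 + νs1 := by rw [← hsum1, hsum2, ha, hs]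
  exact ⟨ha, add_left_cancel (add_right_cancel hsum), hs⟩
end

section
/- Let $T$ be a second countable topological space and $f \colon \Omega \times T \to [-\infty, \infty]$ an integrand. Then $f$ is pre-normal (i.e. the epigraphical multifunction $\omega \mapsto \mathrm{epi}\, f_\omega \subset T \times \mathbb{R}$ is Effros measurable) if and only if $f$ is infimally measurable, i.e. for every open $O \subset T$ the function $\omega \mapsto \inf_{x \in O} f_\omega(x)$ is measurable. -/
/-!
The epigraph of `g : T → EReal` meets a box `s × (a, c)` exactly when `a < c` and
`⨅ x ∈ s, g x < c`. With `a = ⊥` this writes the sublevel sets of `ω ↦ ⨅ x ∈ O, f ω x` as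
pre-normality sets. Conversely, when `T` is second countable, every open subset of `T × ℝ` is a
countable union of boxes `U × (a, b)` with `U` from a countable basis and `a, b` rational, and
the pre-normality set of each box is measurable by infimal measurability.
-/

open Set TopologicalSpace

theorem MeasurableSet.setOf_exists_mem_of_isTopologicalBasis {Ω X : Type*} [MeasurableSpace Ω]
    [TopologicalSpace X] {B : Set (Set X)} (hB : IsTopologicalBasis B) (hBc : B.Countable)
    {P : Ω → X → Prop} (hP : ∀ b ∈ B, MeasurableSet {ω | ∃ x ∈ b, P ω x})
    {O : Set X} (hO : IsOpen O) : MeasurableSet {ω | ∃ x ∈ O, P ω x} := by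
  have hunion : {ω | ∃ x ∈ O, P ω x} = ⋃ b ∈ {b ∈ B | b ⊆ O}, {ω | ∃ x ∈ b, P ω x} := by
    conv_lhs => rw [hB.open_eq_sUnion' hO]
    ext ω
    simp only [mem_ofPred_eq, mem_sUnion, mem_iUnion, exists_prop]
    aesop
  rw [hunion]
  exact .biUnion (hBc.mono (sep_subset _ _)) fun b hb => hP b hb.1

theorem exists_mem_prod_Ioo_le_iff {T : Type*} {s : Set T} {g : T → EReal} {a c : EReal} :
    (∃ p ∈ s ×ˢ (Real.toEReal ⁻¹' Ioo a c), g p.1 ≤ p.2) ↔ a < c ∧ ⨅ x : s, g x < c := by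
  constructor
  · rintro ⟨⟨x, r⟩, ⟨hx, har, hrc⟩, hgr⟩
    exact ⟨har.trans hrc, (iInf_le _ (⟨x, hx⟩ : s)).trans_lt (hgr.trans_lt hrc)⟩
  · rintro ⟨hac, hinf⟩
    obtain ⟨⟨x, hx⟩, hgx⟩ := iInf_lt_iff.1 hinf
    obtain ⟨r, hr, hrc⟩ := EReal.lt_iff_exists_real_btwn.1 (max_lt hac hgx)
    exact ⟨(x, r), ⟨hx, (le_max_left _ _).trans_lt hr, hrc⟩, ((le_max_right _ _).trans_lt hr).le⟩

theorem measurable_iInf_of_prenormal {Ω T : Type*} [MeasurableSpace Ω] [TopologicalSpace T]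
    {f : Ω → T → EReal}
    (hf : ∀ O : Set (T × ℝ), IsOpen O → MeasurableSet {ω | ∃ p ∈ O, f ω p.1 ≤ (p.2 : EReal)})
    {O : Set T} (hO : IsOpen O) : Measurable fun ω => ⨅ x : O, f ω x := by
  refine measurable_of_Iio fun c => ?_
  have hV : IsOpen (Real.toEReal ⁻¹' Ioo ⊥ c) :=
    continuous_coe_real_ereal.isOpen_preimage _ isOpen_Ioo
  convert hf _ (hO.prod hV) using 1
  ext ω
  simp only [mem_preimage, mem_Iio, mem_ofPred_eq, exists_mem_prod_Ioo_le_iff]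
  exact (and_iff_right_of_imp bot_le.trans_lt).symm

theorem prenormal_of_measurable_iInf {Ω T : Type*} [MeasurableSpace Ω] [TopologicalSpace T]
    [SecondCountableTopology T] {f : Ω → T → EReal}
    (hf : ∀ O : Set T, IsOpen O → Measurable fun ω => ⨅ x : O, f ω x)
    {O : Set (T × ℝ)} (hO : IsOpen O) :
    MeasurableSet {ω | ∃ p ∈ O, f ω p.1 ≤ (p.2 : EReal)} := by
  obtain ⟨BT, hBTc, -, hBT⟩ := exists_countable_basis T
  have hBRc : (⋃ (a : ℚ) (b : ℚ) (_ : a < b), {Ioo (a : ℝ) b}).Countable :=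
    countable_iUnion fun _ => countable_iUnion fun _ => countable_iUnion fun _ =>
      countable_singleton _
  refine .setOf_exists_mem_of_isTopologicalBasis (hBT.prod Real.isTopologicalBasis_Ioo_rat)
    (hBTc.image2 hBRc _) ?_ hO
  rintro _ ⟨U, hU, _, hV, rfl⟩
  simp only [mem_iUnion, mem_singleton_iff] at hV
  obtain ⟨a, b, -, rfl⟩ := hV
  have hIoo : Ioo (a : ℝ) b = Real.toEReal ⁻¹' Ioo (a : ℝ) (b : ℝ) := by ext; simp
  simp only [hIoo, exists_mem_prod_Ioo_le_iff, ofPred_and]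
  exact (MeasurableSet.const _).inter (measurableSet_lt (hf U (hBT.isOpen hU)) measurable_const)

/-- For a second countable topological space `T`, an integrand
`f : Ω × T → [-∞,∞]` is pre-normal (its epigraphical multifunction is Effros
measurable) iff it is infimally measurable (for every open `O ⊆ T` the map
`ω ↦ inf_{x ∈ O} f_ω(x)` is measurable). -/
theorem prenormal_iff_infimally_measurable {Ω T : Type*} [MeasurableSpace Ω]
    [TopologicalSpace T] [SecondCountableTopology T]
    (f : Ω → T → EReal) :
    (∀ O : Set (T × ℝ), IsOpen O →
      MeasurableSet {ω : Ω | ∃ p ∈ O, f ω p.1 ≤ (p.2 : EReal)}) ↔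
    (∀ O : Set T, IsOpen O → Measurable fun ω : Ω => ⨅ x : O, f ω x) :=
  ⟨fun h _ hO => measurable_iInf_of_prenormal h hO,
    fun h _ hO => prenormal_of_measurable_iInf h hO⟩
end

section
/- Let $M$ be a separable metric space and $f \colon \Omega \times M \to [-\infty, \infty]$ an integrand such that $x \mapsto f_\omega(x)$ is upper semicontinuous for every $\omega$ and $\omega \mapsto f_\omega(x)$ is measurable for every $x$. Then $f$ is a pre-normal integrand, i.e. the epigraphical multifunction $\omega \mapsto \mathrm{epi}\, f_\omega$ is Effros measurable. -/
open Filter Topology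

/-- On a separable metric space `M`, an integrand `f : Ω × M → [-∞,∞]`
that is upper semicontinuous in `x` (closed hypograph) for every `ω` and measurable in
`ω` for every `x` is pre-normal: its epigraphical multifunction is Effros measurable. -/
theorem usc_caratheodory_prenormal {Ω M : Type*} [MeasurableSpace Ω]
    [MetricSpace M] [TopologicalSpace.SeparableSpace M]
    (f : Ω → M → EReal)
    (husc : ∀ ω : Ω, IsClosed {p : M × ℝ | (p.2 : EReal) ≤ f ω p.1})
    (hmeas : ∀ x : M, Measurable fun ω : Ω => f ω x) :
    ∀ O : Set (M × ℝ), IsOpen O →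
      MeasurableSet {ω : Ω | ∃ p ∈ O, f ω p.1 ≤ (p.2 : EReal)} := by
  intro O hO
  obtain ⟨D, hDc, hDd⟩ := TopologicalSpace.exists_countable_dense M
  have key : {ω : Ω | ∃ p ∈ O, f ω p.1 ≤ (p.2 : EReal)} =
      ⋃ d ∈ D, ⋃ q : ℚ, {ω : Ω | (d, (q : ℝ)) ∈ O ∧ f ω d < ((q : ℝ) : EReal)} := by
    ext ω
    simp only [Set.mem_setOf_eq, Set.mem_iUnion, exists_prop]
    constructor
    · rintro ⟨⟨x, t⟩, hpO, hle⟩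
      rcases isOpen_prod_iff.1 hO x t hpO with ⟨U, V, hU, hV, hxU, htV, hUV⟩
      obtain ⟨ε, hε, hball⟩ := Metric.isOpen_iff.1 hV t htV
      obtain ⟨q, hq1, hq2⟩ := exists_rat_btwn (show t < t + ε by linarith)
      have hqV : (q : ℝ) ∈ V := by
        apply hball
        rw [Metric.mem_ball, Real.dist_eq, abs_lt]
        constructor <;> linarith
      have hlt : f ω x < ((q : ℝ) : EReal) :=
        lt_of_le_of_lt hle (by exact_mod_cast hq1)
      have hC : IsClosed {y : M | ((q : ℝ) : EReal) ≤ f ω y} := by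
        have := (husc ω).preimage
          (continuous_id.prodMk continuous_const : Continuous fun y : M => (y, (q : ℝ)))
        simpa using this
      by_contra hcon
      push_neg at hcon
      have hsub : U ∩ D ⊆ {y : M | ((q : ℝ) : EReal) ≤ f ω y} := by
        rintro d ⟨hdU, hdD⟩
        exact hcon d hdD q (hUV ⟨hdU, hqV⟩)
      have hxC : x ∈ {y : M | ((q : ℝ) : EReal) ≤ f ω y} :=
        (hC.closure_subset_iff.2 hsub) (hDd.open_subset_closure_inter hU hxU)
      exact absurd hxC (not_le.2 hlt)
    · rintro ⟨d, hdD, q, hdq, hlt⟩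
      exact ⟨(d, (q : ℝ)), hdq, le_of_lt hlt⟩
  rw [key]
  refine MeasurableSet.biUnion hDc fun d _ => MeasurableSet.iUnion fun q => ?_
  have : {ω : Ω | (d, (q : ℝ)) ∈ O ∧ f ω d < ((q : ℝ) : EReal)} =
      {ω : Ω | (d, (q : ℝ)) ∈ O} ∩ {ω : Ω | f ω d < ((q : ℝ) : EReal)} := rfl
  rw [this]
  exact (MeasurableSet.const _).inter ((hmeas d) measurableSet_Iio)
end
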